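/- Let g : {0,1}^n → {0,1} be a nonzero s-sparse polynomial over F₂ of degree at most d, and let a ∈ {0,1}^n with g(a) = 1 and wt(a) ≥ 24d, where wt denotes Hamming weight. For y uniform on {0,1}^n let a*y denote the coordinatewise AND. Then Pr_y[g(a*y) = 1 and wt(a*y) ≤ (3/4)·wt(a)] ≥ 2^{−(d+1)}. -/

import Mathlib

/-!
Substituting `X i ↦ a i * X i` turns `g(a * y)` into a polynomial in `y` of degree at most `d`
that takes the value `1` at `y = 1`. Over `F₂` such a polynomial is `1` on at least a `2^{-d}`
fraction of the cube: split off the first variable as `g = g₀ + y₀ g₁` and induct, using `g₁`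
(of degree `< d`) when it is not identically zero, and the two copies of `g₀` otherwise. On the
other side, Markov's inequality applied to `3 ^ wt(a * y)`, whose mean is `2 ^ wt(a)`, bounds the
proportion of `y` with `wt(a * y) > 3 wt(a) / 4` by `2^{-(d+1)}` once `wt(a) ≥ 24 d`. For `d = 0`
the involution `y ↦ y + a`, which exchanges `a * y` with its complement in the support of `a`,
gives the bound `1/2`. Subtracting gives the claim.
-/

open MvPolynomial Finset

theorem card_filter_fin_cons_zmod_two {n : ℕ} (P : (Fin (n + 1) → ZMod 2) → Prop)
    [DecidablePred P] :
    #{x | P x} = #{y | P (Fin.cons 0 y)} + #{y | P (Fin.cons 1 y)} := by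
  simp only [card_filter]
  rw [← (Fin.consEquiv fun _ => ZMod 2).sum_comp, Fintype.sum_prod_type]
  exact Fin.sum_univ_two _

namespace MvPolynomial

theorem totalDegree_bind₁_le_mul {R σ τ : Type*} [CommSemiring R] {f : σ → MvPolynomial τ R}
    {k : ℕ} (hf : ∀ i, (f i).totalDegree ≤ k) (p : MvPolynomial σ R) :
    (bind₁ f p).totalDegree ≤ k * p.totalDegree := by
  conv_lhs => rw [p.as_sum, map_sum]
  refine (totalDegree_finsetSum _ _).trans (Finset.sup_le fun v hv => ?_)
  rw [bind₁_monomial]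
  calc (C (coeff v p) * ∏ i ∈ v.support, f i ^ v i).totalDegree
      ≤ ∑ i ∈ v.support, (f i ^ v i).totalDegree := (totalDegree_mul _ _).trans
        (by rw [totalDegree_C, zero_add]; exact totalDegree_finsetProd _ _)
    _ ≤ ∑ i ∈ v.support, k * v i :=
        sum_le_sum fun i _ => (totalDegree_pow _ _).trans (by rw [mul_comm]; gcongr; exact hf i)
    _ = k * v.sum fun _ e => e := by rw [Finsupp.sum, mul_sum]
    _ ≤ k * p.totalDegree := by gcongr; exact le_totalDegree hv

/-- At an idempotent `b` every power `b ^ (k + 1)` equals `b`, so all coefficients of positive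
degree in the first variable collapse into `q₁`. -/
theorem exists_eval_cons_eq_add_mul {R : Type*} [CommSemiring R] {n : ℕ}
    (q : MvPolynomial (Fin (n + 1)) R) :
    ∃ q₀ q₁ : MvPolynomial (Fin n) R, q₀.totalDegree ≤ q.totalDegree ∧
      (q₁ ≠ 0 → q₁.totalDegree < q.totalDegree) ∧
      ∀ (b : R) (y : Fin n → R), IsIdempotentElem b →
        eval (Fin.cons b y) q = eval y q₀ + b * eval y q₁ := by
  set P := finSuccEquiv R n q
  have hcoeff (k : ℕ) (hk : P.coeff k ≠ 0) : (P.coeff k).totalDegree + k ≤ q.totalDegree :=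
    totalDegree_coeff_finSuccEquiv_add_le q k hk
  refine ⟨P.coeff 0, ∑ k ∈ range P.natDegree, P.coeff (k + 1), ?_, fun h₁ => ?_, fun b y hb => ?_⟩
  · by_cases h : P.coeff 0 = 0
    · simp [h]
    · simpa using hcoeff 0 h
  · obtain ⟨k, -, hk⟩ := exists_ne_zero_of_sum_ne_zero h₁
    have hpos := hcoeff (k + 1) hk
    have : (∑ k ∈ range P.natDegree, P.coeff (k + 1)).totalDegree ≤ q.totalDegree - 1 := by
      refine (totalDegree_finsetSum _ _).trans (Finset.sup_le fun j _ => ?_)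
      by_cases h : P.coeff (j + 1) = 0
      · simp [h]
      · have := hcoeff (j + 1) h
        omega
    omega
  · rw [eval_eq_eval_mv_eval', Polynomial.eval_eq_sum_range'
      (Polynomial.natDegree_map_le.trans_lt (Nat.lt_succ_self P.natDegree)),
      sum_range_succ', map_sum, mul_sum, add_comm]
    simp [Polynomial.coeff_map, hb.pow_succ_eq, mul_comm]

theorem two_pow_sub_totalDegree_le_card_eval_eq_one {n : ℕ} (q : MvPolynomial (Fin n) (ZMod 2))
    (hq : ∃ y, eval y q = 1) : 2 ^ (n - q.totalDegree) ≤ #{y | eval y q = 1} := by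
  induction n with
  | zero =>
    obtain ⟨y, hy⟩ := hq
    rw [Nat.zero_sub, pow_zero]
    exact card_pos.mpr ⟨y, mem_filter.mpr ⟨mem_univ y, hy⟩⟩
  | succ n ih =>
    obtain ⟨q₀, q₁, hdeg₀, hdeg₁, heval⟩ := exists_eval_cons_eq_add_mul q
    have hidem : ∀ b : ZMod 2, IsIdempotentElem b := by unfold IsIdempotentElem; decide
    rw [card_filter_fin_cons_zmod_two]
    by_cases h₁ : ∃ y, eval y q₁ = 1
    · have hsub : ({y | eval y q₁ = 1} : Finset _) ⊆
          ({y | eval (Fin.cons 0 y) q = 1} : Finset _) ∪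
            ({y | eval (Fin.cons 1 y) q = 1} : Finset _) := by
        intro y hy
        simp only [mem_filter, mem_union, mem_univ, true_and] at hy ⊢
        rw [heval _ _ (hidem 0), heval _ _ (hidem 1), hy, zero_mul, add_zero, one_mul]
        have key : ∀ c : ZMod 2, c = 1 ∨ c + 1 = 1 := by decide
        exact key _
      have hlt := hdeg₁ (by rintro rfl; simp at h₁)
      calc 2 ^ (n + 1 - q.totalDegree) ≤ 2 ^ (n - q₁.totalDegree) :=
            Nat.pow_le_pow_right two_pos (by omega)
        _ ≤ _ := ih q₁ h₁
        _ ≤ _ := (card_le_card hsub).trans (card_union_le _ _)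
    · have hq₀ (b : ZMod 2) (y : Fin n → ZMod 2) : eval (Fin.cons b y) q = eval y q₀ := by
        have key : ∀ c : ZMod 2, c ≠ 1 → c = 0 := by decide
        rw [heval _ _ (hidem b), key _ fun h => h₁ ⟨y, h⟩, mul_zero, add_zero]
      obtain ⟨z, hz⟩ := hq
      have hwit : eval (Fin.tail z) q₀ = 1 := by rw [← hq₀ (z 0), Fin.cons_self_tail, hz]
      simp only [hq₀]
      calc 2 ^ (n + 1 - q.totalDegree) ≤ 2 ^ (n - q₀.totalDegree + 1) :=
            Nat.pow_le_pow_right two_pos (by omega)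
        _ = 2 ^ (n - q₀.totalDegree) + 2 ^ (n - q₀.totalDegree) := by ring
        _ ≤ _ := add_le_add (ih q₀ ⟨_, hwit⟩) (ih q₀ ⟨_, hwit⟩)

theorem eval_bind₁_C_mul_X {R σ : Type*} [CommSemiring R] (a y : σ → R) (p : MvPolynomial σ R) :
    eval y (bind₁ (fun i => C (a i) * X i) p) = eval (a * y) p := by
  refine (eval₂Hom_bind₁ (RingHom.id _) y _ p).trans ?_
  show eval _ p = eval _ p
  congr 2
  funext i
  simp

theorem two_pow_le_two_pow_totalDegree_mul_card_eval_mul_eq_one {n : ℕ}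
    (p : MvPolynomial (Fin n) (ZMod 2)) {a : Fin n → ZMod 2} (ha : eval a p = 1) :
    2 ^ n ≤ 2 ^ p.totalDegree * #{y | eval (a * y) p = 1} := by
  set q := bind₁ (fun i => C (a i) * X i) p
  have hq_deg : q.totalDegree ≤ p.totalDegree := by
    refine (totalDegree_bind₁_le_mul (k := 1) (fun i => ?_) p).trans (by omega)
    exact (totalDegree_mul _ _).trans (by simp)
  have hsz := two_pow_sub_totalDegree_le_card_eval_eq_one q
    ⟨1, by rw [eval_bind₁_C_mul_X, mul_one, ha]⟩
  simp only [q, eval_bind₁_C_mul_X] at hsz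
  calc 2 ^ n ≤ 2 ^ (p.totalDegree + (n - q.totalDegree)) :=
        Nat.pow_le_pow_right two_pos (by omega)
    _ = 2 ^ p.totalDegree * 2 ^ (n - q.totalDegree) := pow_add _ _ _
    _ ≤ _ := Nat.mul_le_mul_left _ hsz

end MvPolynomial

section HammingTail

variable {ι : Type*} [Fintype ι]

theorem hammingNorm_eq_sum_ite {β : Type*} [DecidableEq β] [Zero β] (x : ι → β) :
    hammingNorm x = ∑ i, if x i ≠ 0 then 1 else 0 :=
  card_filter _ _

theorem sum_three_pow_hammingNorm_mul [DecidableEq ι] (a : ι → ZMod 2) :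
    ∑ y : ι → ZMod 2, 3 ^ hammingNorm (a * y) = 2 ^ (Fintype.card ι + hammingNorm a) := by
  have key : ∀ c : ZMod 2,
      ∑ v : ZMod 2, 3 ^ (if c * v ≠ 0 then 1 else 0) = 2 * 2 ^ (if c ≠ 0 then 1 else 0) := by
    decide
  simp only [hammingNorm_eq_sum_ite, Pi.mul_apply, ← prod_pow_eq_pow_sum]
  rw [← Fintype.prod_sum fun i v => 3 ^ if a i * v ≠ 0 then 1 else 0]
  simp only [key, prod_mul_distrib, prod_const, card_univ, prod_pow_eq_pow_sum, pow_add]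

theorem hammingNorm_mul_add_self_add (a y : ι → ZMod 2) :
    hammingNorm (a * (y + a)) + hammingNorm (a * y) = hammingNorm a := by
  have key : ∀ c v : ZMod 2,
      ((if c * (v + c) ≠ 0 then 1 else 0) + if c * v ≠ 0 then 1 else 0) =
        if c ≠ 0 then 1 else 0 := by
    decide
  simp only [hammingNorm_eq_sum_ite, Pi.mul_apply, Pi.add_apply, ← sum_add_distrib, key]

theorem two_mul_card_hammingNorm_mul_gt_le [DecidableEq ι] (a : ι → ZMod 2) :
    2 * #{y | hammingNorm a < 2 * hammingNorm (a * y)} ≤ 2 ^ Fintype.card ι := by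
  set A : Finset (ι → ZMod 2) := {y | hammingNorm a < 2 * hammingNorm (a * y)}
  have hflip : A.map (Equiv.addRight a).toEmbedding ⊆ Aᶜ := by
    intro z hz
    obtain ⟨y, hy, rfl⟩ := mem_map.mp hz
    have := hammingNorm_mul_add_self_add a y
    simp only [A, mem_compl, mem_filter, mem_univ, true_and] at hy ⊢
    simp only [Equiv.coe_toEmbedding, Equiv.coe_addRight]
    omega
  calc 2 * #A = #A + #(A.map (Equiv.addRight a).toEmbedding) := by rw [card_map]; ring
    _ ≤ #A + #Aᶜ := by gcongr
    _ = 2 ^ Fintype.card ι := by rw [card_add_card_compl, Fintype.card_fun, ZMod.card]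

/-- `2 ^ 28 ≤ 3 ^ 18` after raising both sides to the 24th power. -/
theorem two_pow_add_le_three_pow {w d m : ℕ} (hd : 1 ≤ d) (hw : 24 * d ≤ w)
    (hm : 3 * w < 4 * m) : 2 ^ (w + d + 1) ≤ 3 ^ m := by
  refine (Nat.pow_le_pow_iff_left (n := 24) (by norm_num)).mp ?_
  calc (2 ^ (w + d + 1)) ^ 24 ≤ (2 ^ 28) ^ w := by
        rw [← pow_mul, ← pow_mul]; exact Nat.pow_le_pow_right two_pos (by omega)
    _ ≤ (3 ^ 18) ^ w := Nat.pow_le_pow_left (by norm_num) w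
    _ ≤ (3 ^ m) ^ 24 := by
        rw [← pow_mul, ← pow_mul]; exact Nat.pow_le_pow_right (by norm_num) (by omega)

theorem two_pow_succ_mul_card_hammingNorm_mul_gt_le_of_one_le [DecidableEq ι] (a : ι → ZMod 2)
    {d : ℕ} (hd : 1 ≤ d) (hw : 24 * d ≤ hammingNorm a) :
    2 ^ (d + 1) * #{y | 3 * hammingNorm a < 4 * hammingNorm (a * y)} ≤ 2 ^ Fintype.card ι := by
  set B : Finset (ι → ZMod 2) := {y | 3 * hammingNorm a < 4 * hammingNorm (a * y)}
  set m := 3 * hammingNorm a / 4 + 1 with hm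
  have hmarkov : #B * 3 ^ m ≤ 2 ^ (Fintype.card ι + hammingNorm a) := by
    rw [← sum_three_pow_hammingNorm_mul, ← smul_eq_mul]
    refine (card_nsmul_le_sum B _ _ fun y hy => ?_).trans
      (sum_le_univ_sum_of_nonneg fun _ => by positivity)
    simp only [B, mem_filter, mem_univ, true_and] at hy
    exact Nat.pow_le_pow_right (by norm_num) (by omega)
  refine Nat.le_of_mul_le_mul_right ?_ (by positivity : 0 < 2 ^ hammingNorm a)
  calc 2 ^ (d + 1) * #B * 2 ^ hammingNorm a = #B * 2 ^ (hammingNorm a + d + 1) := by ring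
    _ ≤ #B * 3 ^ m := Nat.mul_le_mul_left _ (two_pow_add_le_three_pow hd hw (by omega))
    _ ≤ 2 ^ Fintype.card ι * 2 ^ hammingNorm a := by rwa [← pow_add]

theorem two_pow_succ_mul_card_hammingNorm_mul_gt_le [DecidableEq ι] (a : ι → ZMod 2) {d : ℕ}
    (hw : 24 * d ≤ hammingNorm a) :
    2 ^ (d + 1) * #{y | 3 * hammingNorm a < 4 * hammingNorm (a * y)} ≤ 2 ^ Fintype.card ι := by
  rcases Nat.eq_zero_or_pos d with rfl | hd
  · have hsub : ({y | 3 * hammingNorm a < 4 * hammingNorm (a * y)} : Finset (ι → ZMod 2)) ⊆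
        ({y | hammingNorm a < 2 * hammingNorm (a * y)} : Finset _) := by
      intro y hy
      simp only [mem_filter, mem_univ, true_and] at hy ⊢
      have := hammingNorm_mul_add_self_add a y
      omega
    exact (Nat.mul_le_mul_left _ (card_le_card hsub)).trans (two_mul_card_hammingNorm_mul_gt_le a)
  · exact two_pow_succ_mul_card_hammingNorm_mul_gt_le_of_one_le a hd hw

end HammingTail

open Classical in
theorem stmt16_general (n d : ℕ) (p : MvPolynomial (Fin n) (ZMod 2))
    (hdeg : p.totalDegree ≤ d)
    (a : Fin n → ZMod 2) (ha : MvPolynomial.eval a p = 1)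
    (hwt : 24 * d ≤ (Finset.univ.filter (fun i : Fin n => a i ≠ 0)).card) :
    (1 : ℝ) / 2 ^ (d + 1) ≤
      ((Finset.univ.filter (fun y : Fin n → ZMod 2 =>
          MvPolynomial.eval (fun i => a i * y i) p = 1 ∧
            ((Finset.univ.filter (fun i : Fin n => a i * y i ≠ 0)).card : ℝ) ≤
              (3 / 4) * ((Finset.univ.filter (fun i : Fin n => a i ≠ 0)).card : ℝ))).card : ℝ)
        / 2 ^ n := by
  set G : Finset (Fin n → ZMod 2) := {y | eval (a * y) p = 1}
  set B : Finset (Fin n → ZMod 2) := {y | 3 * hammingNorm a < 4 * hammingNorm (a * y)}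
  set T : Finset (Fin n → ZMod 2) :=
    {y | eval (a * y) p = 1 ∧ (hammingNorm (a * y) : ℝ) ≤ 3 / 4 * hammingNorm a}
  have hG : (2 : ℝ) ^ n ≤ 2 ^ d * #G := by
    exact_mod_cast (two_pow_le_two_pow_totalDegree_mul_card_eval_mul_eq_one p ha).trans
      (Nat.mul_le_mul_right _ (Nat.pow_le_pow_right two_pos hdeg))
  have hB : (2 : ℝ) ^ (d + 1) * #B ≤ 2 ^ n := by
    exact_mod_cast Fintype.card_fin n ▸ two_pow_succ_mul_card_hammingNorm_mul_gt_le a hwt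
  have hGT : G ⊆ T ∪ B := by
    intro y hy
    simp only [G, T, B, mem_union, mem_filter, mem_univ, true_and] at hy ⊢
    by_cases hbad : 3 * hammingNorm a < 4 * hammingNorm (a * y)
    · exact Or.inr hbad
    · have : (4 * hammingNorm (a * y) : ℝ) ≤ 3 * hammingNorm a := by exact_mod_cast not_lt.mp hbad
      exact Or.inl ⟨hy, by linarith⟩
  have hT : (#G : ℝ) ≤ #T + #B := by exact_mod_cast (card_le_card hGT).trans (card_union_le _ _)
  change (1 : ℝ) / 2 ^ (d + 1) ≤ #T / 2 ^ n
  rw [div_le_div_iff₀ (by positivity) (by positivity), one_mul, pow_succ]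
  rw [pow_succ] at hB
  nlinarith [mul_le_mul_of_nonneg_left hT (by positivity : (0 : ℝ) ≤ 2 ^ d)]

open Classical in
theorem stmt16 (n s d : ℕ) (p : MvPolynomial (Fin n) (ZMod 2))
    (hp : p ≠ 0) (hsparse : p.support.card ≤ s) (hdeg : p.totalDegree ≤ d)
    (a : Fin n → ZMod 2) (ha : MvPolynomial.eval a p = 1)
    (hwt : 24 * d ≤ (Finset.univ.filter (fun i : Fin n => a i ≠ 0)).card) :
    (1 : ℝ) / 2 ^ (d + 1) ≤
      ((Finset.univ.filter (fun y : Fin n → ZMod 2 =>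
          MvPolynomial.eval (fun i => a i * y i) p = 1 ∧
            ((Finset.univ.filter (fun i : Fin n => a i * y i ≠ 0)).card : ℝ) ≤
              (3 / 4) * ((Finset.univ.filter (fun i : Fin n => a i ≠ 0)).card : ℝ))).card : ℝ)
        / 2 ^ n :=
  stmt16_general n d p hdeg a ha hwt
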